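/- Let λ > 0 and α > 0 be real numbers. Then for every real y with |y| ≤ λ/2, the sum over negative integers satisfies ∑_{k=1}^∞ exp(α(1 − (y − kλ)²)) ≤ exp(α − αλ²/4) · (2 − exp(−αλ²)) / (1 − exp(−αλ²)). (In particular the series on the left converges.) -/

import Mathlib

/-!
For `|y| ≤ λ/2` the `k`-th term satisfies `(k + 1)λ - y ≥ (k + 1/2)λ`, so its square is at least
`λ²(k + 1/4)`. Hence the `k`-th term is at most `exp(α - αλ²/4) · rᵏ` with `r = exp(-αλ²) < 1`, and
the geometric series sums to `exp(α - αλ²/4) / (1 - r)`, which is at most the stated bound since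
`2 - r ≥ 1`.
-/

open Real

theorem summable_and_tsum_le_of_le_geometric {f : ℕ → ℝ} {C r : ℝ} (hr₀ : 0 ≤ r) (hr₁ : r < 1)
    (hf₀ : ∀ k, 0 ≤ f k) (hf : ∀ k, f k ≤ C * r ^ k) :
    Summable f ∧ ∑' k, f k ≤ C / (1 - r) := by
  have hgeom : HasSum (fun k ↦ C * r ^ k) (C / (1 - r)) := by
    simpa only [div_eq_mul_inv] using (hasSum_geometric_of_lt_one hr₀ hr₁).mul_left C
  have hsum : Summable f := .of_nonneg_of_le hf₀ hf hgeom.summable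
  exact ⟨hsum, hasSum_le hf hsum.hasSum hgeom⟩

theorem mul_add_quarter_le_sub_succ_mul_sq {lam y : ℝ} (hy : |y| ≤ lam / 2) (k : ℕ) :
    lam ^ 2 * (k + 1 / 4) ≤ (y - (k + 1) * lam) ^ 2 := by
  have hlam : 0 ≤ lam := by linarith [abs_nonneg y]
  have hshift : lam * (k + 1 / 2) ≤ (k + 1) * lam - y := by linarith [le_of_abs_le hy]
  have hshift₀ : 0 ≤ lam * (k + 1 / 2) := by positivity
  calc lam ^ 2 * (k + 1 / 4) ≤ (lam * (k + 1 / 2)) ^ 2 := by nlinarith [sq_nonneg (k : ℝ)]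
    _ ≤ ((k + 1) * lam - y) ^ 2 := pow_le_pow_left₀ hshift₀ hshift 2
    _ = (y - (k + 1) * lam) ^ 2 := by ring

theorem exp_mul_one_sub_sub_succ_mul_sq_le {lam α y : ℝ} (hα : 0 ≤ α) (hy : |y| ≤ lam / 2)
    (k : ℕ) :
    exp (α * (1 - (y - (k + 1) * lam) ^ 2)) ≤
      exp (α - α * lam ^ 2 / 4) * exp (-(α * lam ^ 2)) ^ k := by
  rw [← exp_nat_mul, ← exp_add, exp_le_exp]
  nlinarith [mul_le_mul_of_nonneg_left (mul_add_quarter_le_sub_succ_mul_sq hy k) hα]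

/-- For λ > 0, α > 0 and |y| ≤ λ/2, the series
∑_{k=1}^∞ exp(α(1 − (y − kλ)²)) converges and is bounded by
exp(α − αλ²/4) · (2 − exp(−αλ²)) / (1 − exp(−αλ²)). -/
theorem stmt_1 (lam α : ℝ) (hlam : 0 < lam) (hα : 0 < α)
    (y : ℝ) (hy : |y| ≤ lam / 2) :
    Summable (fun k : ℕ => Real.exp (α * (1 - (y - (k + 1 : ℝ) * lam) ^ 2))) ∧
    ∑' k : ℕ, Real.exp (α * (1 - (y - (k + 1 : ℝ) * lam) ^ 2)) ≤
      Real.exp (α - α * lam ^ 2 / 4) *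
        (2 - Real.exp (-(α * lam ^ 2))) / (1 - Real.exp (-(α * lam ^ 2))) := by
  set r := exp (-(α * lam ^ 2))
  have hr₀ : 0 < r := exp_pos _
  have hr₁ : r < 1 := exp_lt_one_iff.mpr (neg_neg_of_pos (by positivity))
  obtain ⟨hsum, hle⟩ := summable_and_tsum_le_of_le_geometric hr₀.le hr₁
    (fun _ ↦ (exp_pos _).le) (exp_mul_one_sub_sub_succ_mul_sq_le hα.le hy)
  refine ⟨hsum, hle.trans ?_⟩
  gcongr
  exact le_mul_of_one_le_right (exp_pos _).le (by linarith)
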